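/- Let ν be a probability measure on ℝⁿ with finite second moments, let Q ∈ ℝ^{d×d} and R ∈ ℝ^{m×m} be symmetric positive definite, and assume the system is mean square stabilizable, i.e. there exist K̄ ∈ ℝ^{m×d} and a symmetric positive definite P̄ such that P̄ − C̄₀ᵀ(Σ̃ ⊗ P̄)C̄₀ is positive definite, where C̄₀ is the vertical stacking of A₀ + B₀K̄, …, Aₙ + BₙK̄. Define the value-iteration sequence P₀ = 0 and P_{k+1} = Q + F(P_k) − H(P_k)ᵀ(R + G(P_k))⁻¹H(P_k). Then P_k ⪯ P_{k+1} for all k, the sequence (P_k) is bounded above in the Loewner order, and it converges (entrywise) to a symmetric positive definite matrix P_∞ that satisfies the Riccati equation P_∞ = Q + F(P_∞) − H(P_∞)ᵀ(R + G(P_∞))⁻¹H(P_∞). -/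

import Mathlib

open MeasureTheory Matrix Filter
open scoped Kronecker

noncomputable section

/-- `A(w) = A₀ + Σᵢ w⁽ⁱ⁾ Aᵢ`. -/
def Amat {n d : ℕ} (A : Fin (n + 1) → Matrix (Fin d) (Fin d) ℝ) (w : Fin n → ℝ) :
    Matrix (Fin d) (Fin d) ℝ :=
  A 0 + ∑ i : Fin n, w i • A i.succ

/-- `B(w) = B₀ + Σᵢ w⁽ⁱ⁾ Bᵢ`. -/
def Bmat {n d m : ℕ} (B : Fin (n + 1) → Matrix (Fin d) (Fin m) ℝ) (w : Fin n → ℝ) :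
    Matrix (Fin d) (Fin m) ℝ :=
  B 0 + ∑ i : Fin n, w i • B i.succ

/-- `Ā₀`: the `((n+1)d) × d` vertical stacking of `A₀, A₁, …, Aₙ`. -/
def Abar {n d : ℕ} (A : Fin (n + 1) → Matrix (Fin d) (Fin d) ℝ) :
    Matrix (Fin (n + 1) × Fin d) (Fin d) ℝ :=
  Matrix.of fun p j => A p.1 p.2 j

/-- `B̄₀`: the `((n+1)d) × m` vertical stacking of `B₀, B₁, …, Bₙ`. -/
def Bbar {n d m : ℕ} (B : Fin (n + 1) → Matrix (Fin d) (Fin m) ℝ) :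
    Matrix (Fin (n + 1) × Fin d) (Fin m) ℝ :=
  Matrix.of fun p j => B p.1 p.2 j

/-- `Σ̃ = [[1, μᵀ], [μ, Σ + μμᵀ]]`. -/
def tildeSigma {n : ℕ} (μ : Fin n → ℝ) (S : Matrix (Fin n) (Fin n) ℝ) :
    Matrix (Fin (n + 1)) (Fin (n + 1)) ℝ :=
  Matrix.of fun i j =>
    Fin.cases (motive := fun _ => ℝ)
      (Fin.cases (motive := fun _ => ℝ) (1 : ℝ) (fun j' => μ j') j)
      (fun i' => Fin.cases (motive := fun _ => ℝ) (μ i')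
        (fun j' => S i' j' + μ i' * μ j') j) i

/-- `F(P) = Ā₀ᵀ(Σ̃ ⊗ P)Ā₀`. -/
def Fm {n d : ℕ} (A : Fin (n + 1) → Matrix (Fin d) (Fin d) ℝ)
    (St : Matrix (Fin (n + 1)) (Fin (n + 1)) ℝ) (P : Matrix (Fin d) (Fin d) ℝ) :
    Matrix (Fin d) (Fin d) ℝ :=
  (Abar A)ᵀ * (St ⊗ₖ P) * Abar A

/-- `G(P) = B̄₀ᵀ(Σ̃ ⊗ P)B̄₀`. -/
def Gm {n d m : ℕ} (B : Fin (n + 1) → Matrix (Fin d) (Fin m) ℝ)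
    (St : Matrix (Fin (n + 1)) (Fin (n + 1)) ℝ) (P : Matrix (Fin d) (Fin d) ℝ) :
    Matrix (Fin m) (Fin m) ℝ :=
  (Bbar B)ᵀ * (St ⊗ₖ P) * Bbar B

/-- `H(P) = B̄₀ᵀ(Σ̃ ⊗ P)Ā₀`. -/
def Hm {n d m : ℕ} (A : Fin (n + 1) → Matrix (Fin d) (Fin d) ℝ)
    (B : Fin (n + 1) → Matrix (Fin d) (Fin m) ℝ)
    (St : Matrix (Fin (n + 1)) (Fin (n + 1)) ℝ) (P : Matrix (Fin d) (Fin d) ℝ) :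
    Matrix (Fin m) (Fin d) ℝ :=
  (Bbar B)ᵀ * (St ⊗ₖ P) * Abar A


/-- The value-iteration sequence `P₀ = 0`,
`P_{k+1} = Q + F(P_k) − H(P_k)ᵀ(R + G(P_k))⁻¹H(P_k)`. -/
def Pseq {n d m : ℕ} (A : Fin (n + 1) → Matrix (Fin d) (Fin d) ℝ)
    (B : Fin (n + 1) → Matrix (Fin d) (Fin m) ℝ)
    (St : Matrix (Fin (n + 1)) (Fin (n + 1)) ℝ)
    (Q : Matrix (Fin d) (Fin d) ℝ) (R : Matrix (Fin m) (Fin m) ℝ) :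
    ℕ → Matrix (Fin d) (Fin d) ℝ
  | 0 => 0
  | k + 1 => Q + Fm A St (Pseq A B St Q R k) -
      (Hm A B St (Pseq A B St Q R k))ᵀ * (R + Gm B St (Pseq A B St Q R k))⁻¹ *
        Hm A B St (Pseq A B St Q R k)

/-!
Write `𝓛_K(P) = Q + KᵀRK + (Ā₀ + B̄₀K)ᵀ(Σ̃ ⊗ P)(Ā₀ + B̄₀K)` for the cost recursion of the feedback
`u = Kx`. Completing the square gives `𝓛_K(P) = 𝓡(P) + (K - K*)ᵀ(R + G(P))(K - K*)`, where `𝓡` is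
the Riccati map and `K* = -(R + G(P))⁻¹H(P)`, so `𝓡 = min_K 𝓛_K` on positive semidefinite `P`.
Since `Σ̃ = 𝔼[(1, w)(1, w)ᵀ]` is positive semidefinite, each `𝓛_K` is monotone, hence so is `𝓡`,
and `P_k` increases. For the stabilizing pair `(K̄, P̄)` and `c` large, `𝓛_K̄(cP̄) ⪯ cP̄`, and
`P_{k+1} = 𝓡(P_k) ⪯ 𝓛_K̄(P_k)` bounds `P_k` by `cP̄`. An increasing bounded sequence of symmetric
matrices converges, because its quadratic forms do and polarization recovers the entries; the
limit is a fixed point of the continuous map `𝓡` and dominates `P₁ = Q ≻ 0`.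
-/

open scoped MatrixOrder Topology

namespace Matrix

variable {ι κ : Type*} [Fintype ι]

lemma exists_le_smul_of_posDef [DecidableEq ι] {D S : Matrix ι ι ℝ} (hD : D.PosDef)
    (hS : S.IsHermitian) : ∃ c : ℝ, 0 < c ∧ S ≤ c • D := by
  cases isEmpty_or_nonempty ι
  · exact ⟨1, one_pos, by simp [Subsingleton.elim S (1 • D)]⟩
  obtain ⟨r, hr, hrD⟩ : ∃ r > 0, algebraMap ℝ _ r ≤ D :=
    (CFC.exists_pos_algebraMap_le_iff hD.isHermitian).2 fun x hx =>
      (isStrictlyPositive_iff_posDef.2 hD).spectrum_pos hx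
  obtain ⟨s, hs⟩ := (isCompact_iff_compactSpace.mpr inferInstance :
    IsCompact (spectrum ℝ S)).bddAbove
  have hS_le : S ≤ algebraMap ℝ _ (max s 1) :=
    le_algebraMap_of_spectrum_le (fun x hx => (hs hx).trans (le_max_left _ _)) hS
  set c : ℝ := max s 1 / r
  have hc : 0 < c := by positivity
  refine ⟨c, hc, hS_le.trans ?_⟩
  calc algebraMap ℝ (Matrix ι ι ℝ) (max s 1) = c • algebraMap ℝ (Matrix ι ι ℝ) r := by
        rw [Algebra.smul_def, ← map_mul, div_mul_cancel₀ _ hr.ne']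
    _ ≤ c • D := smul_le_smul_of_nonneg_left hrD hc.le

lemma PosSemidef.transpose_mul_mul_same [Fintype κ] {M : Matrix ι ι ℝ} (hM : M.PosSemidef)
    (X : Matrix ι κ ℝ) : (Xᵀ * M * X).PosSemidef := by
  simpa [conjTranspose_eq_transpose_of_trivial] using hM.conjTranspose_mul_mul_same X

lemma transpose_mul_mul_le_transpose_mul_mul [Fintype κ] {M N : Matrix ι ι ℝ} (h : M ≤ N)
    (X : Matrix ι κ ℝ) : Xᵀ * M * X ≤ Xᵀ * N * X := by
  rw [le_iff, ← Matrix.sub_mul, ← Matrix.mul_sub]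
  exact (le_iff.1 h).transpose_mul_mul_same X

lemma kronecker_le_kronecker_left [Fintype κ] {S : Matrix κ κ ℝ} (hS : S.PosSemidef)
    {P P' : Matrix ι ι ℝ} (h : P ≤ P') : S ⊗ₖ P ≤ S ⊗ₖ P' := by
  have hsub : S ⊗ₖ P' - S ⊗ₖ P = S ⊗ₖ (P' - P) := by
    ext
    simp [mul_sub]
  rw [le_iff, hsub]
  exact hS.kronecker (le_iff.1 h)

lemma dotProduct_mulVec_le_of_le {M N : Matrix ι ι ℝ} (h : M ≤ N) (x : ι → ℝ) :
    x ⬝ᵥ (M *ᵥ x) ≤ x ⬝ᵥ (N *ᵥ x) := by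
  simpa [sub_mulVec, sub_nonneg] using (le_iff.1 h).dotProduct_mulVec_nonneg x

lemma isClosed_setOf_posSemidef : IsClosed {M : Matrix ι ι ℝ | M.PosSemidef} := by
  have hset : {M : Matrix ι ι ℝ | M.PosSemidef} =
      {M | Mᴴ = M} ∩ ⋂ x : ι → ℝ, {M | 0 ≤ x ⬝ᵥ (M *ᵥ x)} := by
    ext M
    simp [posSemidef_iff_dotProduct_mulVec, IsHermitian]
  rw [hset]
  exact (isClosed_eq continuous_id.matrix_conjTranspose continuous_id).inter <|
    isClosed_iInter fun x => isClosed_le continuous_const <|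
      continuous_const.dotProduct (continuous_id.matrix_mulVec continuous_const)

instance : OrderClosedTopology (Matrix ι ι ℝ) where
  isClosed_le' := isClosed_setOf_posSemidef.preimage (continuous_snd.sub continuous_fst)

lemma IsHermitian.apply_eq_polarization [DecidableEq ι] {M : Matrix ι ι ℝ} (hM : M.IsHermitian)
    (i j : ι) :
    M i j = ((Pi.single i 1 + Pi.single j 1) ⬝ᵥ (M *ᵥ (Pi.single i 1 + Pi.single j 1))
      - Pi.single i 1 ⬝ᵥ (M *ᵥ Pi.single i 1) - Pi.single j 1 ⬝ᵥ (M *ᵥ Pi.single j 1)) / 2 := by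
  have hji : M j i = M i j := by simpa using congrFun (congrFun hM i) j
  simp only [mulVec_add, add_dotProduct, dotProduct_add, mulVec_single_one, single_one_dotProduct,
    col_apply]
  rw [hji]
  ring

lemma exists_tendsto_of_monotone_of_le {P : ℕ → Matrix ι ι ℝ} {U : Matrix ι ι ℝ}
    (hP : Monotone P) (hU : ∀ k, P k ≤ U) : ∃ L, Tendsto P atTop (𝓝 L) := by
  classical
  -- `P k - P 0` is positive semidefinite, so symmetric even if `P 0` is not.
  set D : ℕ → Matrix ι ι ℝ := fun k => P k - P 0
  have hD_mono : Monotone D := fun k l hkl => sub_le_sub_right (hP hkl) _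
  have hD_herm (k : ℕ) : (D k).IsHermitian := (le_iff.1 (hP (Nat.zero_le k))).isHermitian
  have hquad (x : ι → ℝ) : ∃ l, Tendsto (fun k => x ⬝ᵥ (D k *ᵥ x)) atTop (𝓝 l) :=
    ⟨_, tendsto_atTop_ciSup (fun k l hkl => dotProduct_mulVec_le_of_le (hD_mono hkl) x)
      ⟨x ⬝ᵥ ((U - P 0) *ᵥ x), by
        rintro _ ⟨k, rfl⟩
        exact dotProduct_mulVec_le_of_le (sub_le_sub_right (hU k) _) x⟩⟩
  choose q hq using hquad
  set e : ι → ι → ℝ := fun i => Pi.single i 1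
  have hD_lim : Tendsto D atTop (𝓝 (of fun i j => (q (e i + e j) - q (e i) - q (e j)) / 2)) := by
    refine tendsto_pi_nhds.2 fun i => tendsto_pi_nhds.2 fun j => ?_
    simp_rw [fun k => (hD_herm k).apply_eq_polarization i j]
    exact (((hq _).sub (hq _)).sub (hq _)).div_const 2
  exact ⟨P 0 + _, by simpa [D] using hD_lim.const_add (P 0)⟩

lemma posSemidef_of_integral_mul {Ω : Type*} [MeasurableSpace Ω] (ν : Measure Ω)
    {v : Ω → ι → ℝ} (hv : ∀ i j, Integrable (fun ω => v ω i * v ω j) ν) :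
    (of fun i j => ∫ ω, v ω i * v ω j ∂ν).PosSemidef := by
  refine PosSemidef.of_dotProduct_mulVec_nonneg ?_ fun x => ?_
  · ext i j
    simp [mul_comm]
  have hsq (ω : Ω) : (x ⬝ᵥ v ω) ^ 2 = ∑ i, ∑ j, x i * (v ω i * v ω j * x j) := by
    rw [sq, dotProduct, Finset.sum_mul_sum]
    exact Finset.sum_congr rfl fun i _ => Finset.sum_congr rfl fun j _ => by ring
  have hquad : star x ⬝ᵥ ((of fun i j => ∫ ω, v ω i * v ω j ∂ν) *ᵥ x)
      = ∫ ω, (x ⬝ᵥ v ω) ^ 2 ∂ν := by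
    simp_rw [hsq]
    rw [integral_finsetSum _ fun i _ => integrable_finsetSum _ fun j _ =>
      ((hv i j).mul_const _).const_mul _]
    simp_rw [integral_finsetSum _ fun j _ => ((hv _ j).mul_const _).const_mul _,
      integral_const_mul, integral_mul_const]
    simp [dotProduct, mulVec, Finset.mul_sum]
  rw [hquad]
  exact integral_nonneg fun ω => sq_nonneg _

end Matrix

lemma ContinuousAt.matrix_mul {X ι κ μ R : Type*} [TopologicalSpace X] [Fintype κ]
    [TopologicalSpace R] [Mul R] [AddCommMonoid R] [ContinuousAdd R] [ContinuousMul R]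
    {f : X → Matrix ι κ R} {g : X → Matrix κ μ R} {x : X} (hf : ContinuousAt f x)
    (hg : ContinuousAt g x) : ContinuousAt (fun y => f y * g y) x :=
  (continuous_fst.matrix_mul continuous_snd).continuousAt.comp (f := fun y => (f y, g y))
    (hf.prodMk hg)

section SecondMoments

variable {n : ℕ} {ν : Measure (Fin n → ℝ)}

lemma integrable_vecCons_one_mul [IsFiniteMeasure ν]
    (hint1 : ∀ i, Integrable (fun w : Fin n → ℝ => w i) ν)
    (hint2 : ∀ i j, Integrable (fun w : Fin n → ℝ => w i * w j) ν) (i j : Fin (n + 1)) :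
    Integrable (fun w => vecCons 1 w i * vecCons 1 w j) ν := by
  cases i using Fin.cases <;> cases j using Fin.cases <;> simp [hint1, hint2]

lemma integral_sub_mul_sub [IsProbabilityMeasure ν]
    (hint1 : ∀ i, Integrable (fun w : Fin n → ℝ => w i) ν)
    (hint2 : ∀ i j, Integrable (fun w : Fin n → ℝ => w i * w j) ν)
    {μ : Fin n → ℝ} (hμ : ∀ i, μ i = ∫ w, w i ∂ν) (i j : Fin n) :
    ∫ w, (w i - μ i) * (w j - μ j) ∂ν = ∫ w, w i * w j ∂ν - μ i * μ j := by
  have hexp : (fun w : Fin n → ℝ => (w i - μ i) * (w j - μ j))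
      = fun w => w i * w j - (μ j * w i + μ i * w j - μ i * μ j) := by
    funext w
    ring
  have hi : Integrable (fun w : Fin n → ℝ => μ j * w i) ν := (hint1 i).const_mul _
  have hj : Integrable (fun w : Fin n → ℝ => μ i * w j) ν := (hint1 j).const_mul _
  have hsum : Integrable (fun w : Fin n → ℝ => μ j * w i + μ i * w j) ν := hi.add hj
  have hlin : Integrable (fun w : Fin n → ℝ => μ j * w i + μ i * w j - μ i * μ j) ν :=
    hsum.sub (integrable_const _)
  rw [hexp, integral_sub (hint2 i j) hlin,
    integral_sub hsum (integrable_const _), integral_add hi hj, integral_const_mul,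
    integral_const_mul, ← hμ, ← hμ, integral_const, probReal_univ, one_smul]
  ring

lemma tildeSigma_eq_integral [IsProbabilityMeasure ν]
    (hint1 : ∀ i, Integrable (fun w : Fin n → ℝ => w i) ν)
    (hint2 : ∀ i j, Integrable (fun w : Fin n → ℝ => w i * w j) ν)
    {μ : Fin n → ℝ} (hμ : ∀ i, μ i = ∫ w, w i ∂ν)
    {Sg : Matrix (Fin n) (Fin n) ℝ} (hSg : ∀ i j, Sg i j = ∫ w, (w i - μ i) * (w j - μ j) ∂ν) :
    tildeSigma μ Sg = of fun i j => ∫ w, vecCons 1 w i * vecCons 1 w j ∂ν := by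
  ext i j
  cases i using Fin.cases <;> cases j using Fin.cases
  · simp [tildeSigma]
  · simp [tildeSigma, hμ]
  · simp [tildeSigma, hμ]
  · simp [tildeSigma, hSg, integral_sub_mul_sub hint1 hint2 hμ]

lemma tildeSigma_posSemidef [IsProbabilityMeasure ν]
    (hint1 : ∀ i, Integrable (fun w : Fin n → ℝ => w i) ν)
    (hint2 : ∀ i j, Integrable (fun w : Fin n → ℝ => w i * w j) ν)
    {μ : Fin n → ℝ} (hμ : ∀ i, μ i = ∫ w, w i ∂ν)
    {Sg : Matrix (Fin n) (Fin n) ℝ} (hSg : ∀ i j, Sg i j = ∫ w, (w i - μ i) * (w j - μ j) ∂ν) :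
    (tildeSigma μ Sg).PosSemidef := by
  rw [tildeSigma_eq_integral hint1 hint2 hμ hSg]
  exact posSemidef_of_integral_mul ν (integrable_vecCons_one_mul hint1 hint2)

end SecondMoments

section Riccati

variable {n d m : ℕ} {A : Fin (n + 1) → Matrix (Fin d) (Fin d) ℝ}
  {B : Fin (n + 1) → Matrix (Fin d) (Fin m) ℝ} {St : Matrix (Fin (n + 1)) (Fin (n + 1)) ℝ}
  {Q : Matrix (Fin d) (Fin d) ℝ} {R : Matrix (Fin m) (Fin m) ℝ}

variable (A B St Q R) in
def riccatiMap (P : Matrix (Fin d) (Fin d) ℝ) : Matrix (Fin d) (Fin d) ℝ :=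
  Q + Fm A St P - (Hm A B St P)ᵀ * (R + Gm B St P)⁻¹ * Hm A B St P

variable (A B St Q R) in
def lyapunovMap (K : Matrix (Fin m) (Fin d) ℝ) (P : Matrix (Fin d) (Fin d) ℝ) :
    Matrix (Fin d) (Fin d) ℝ :=
  Q + Kᵀ * R * K + (Abar A + Bbar B * K)ᵀ * (St ⊗ₖ P) * (Abar A + Bbar B * K)

variable (A B St R) in
def optimalGain (P : Matrix (Fin d) (Fin d) ℝ) : Matrix (Fin m) (Fin d) ℝ :=
  -((R + Gm B St P)⁻¹ * Hm A B St P)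

lemma lyapunovMap_eq_riccatiMap_add {P : Matrix (Fin d) (Fin d) ℝ} (hSt : St.IsSymm)
    (hP : P.IsSymm) (hR : R.IsSymm) (hW : IsUnit (R + Gm B St P).det)
    (K : Matrix (Fin m) (Fin d) ℝ) :
    lyapunovMap A B St Q R K P = riccatiMap A B St Q R P +
      (K - optimalGain A B St R P)ᵀ * (R + Gm B St P) * (K - optimalGain A B St R P) := by
  set W := R + Gm B St P with hW_def
  have hM : (St ⊗ₖ P)ᵀ = St ⊗ₖ P := by rw [← kroneckerMap_transpose, hSt, hP]
  have hW_inv : (W⁻¹)ᵀ = W⁻¹ := by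
    rw [transpose_nonsing_inv, hW_def, transpose_add, hR, Gm, transpose_mul, transpose_mul, hM,
      transpose_transpose, Matrix.mul_assoc]
  have hW_mul_inv (X : Matrix (Fin m) (Fin d) ℝ) : W * (W⁻¹ * X) = X := by
    rw [← Matrix.mul_assoc, mul_nonsing_inv _ hW, Matrix.one_mul]
  have hW_inv_mul (X : Matrix (Fin m) (Fin d) ℝ) : W⁻¹ * (W * X) = X := by
    rw [← Matrix.mul_assoc, nonsing_inv_mul _ hW, Matrix.one_mul]
  have hKW (X : Matrix (Fin m) (Fin d) ℝ) :
      Kᵀ * (R * X) + Kᵀ * ((Bbar B)ᵀ * ((St ⊗ₖ P) * (Bbar B * X))) = Kᵀ * (W * X) := by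
    rw [hW_def, Gm, Matrix.add_mul, Matrix.mul_add]
    simp only [Matrix.mul_assoc]
  simp only [lyapunovMap, riccatiMap, optimalGain, Fm, Hm, sub_neg_eq_add, ← hW_def,
    transpose_add, transpose_mul, transpose_transpose, hW_inv, hM, Matrix.add_mul, Matrix.mul_add,
    Matrix.mul_assoc, hW_mul_inv, hW_inv_mul]
  rw [← hKW]
  abel

lemma posDef_add_Gm (hSt : St.PosSemidef) (hR : R.PosDef) {P : Matrix (Fin d) (Fin d) ℝ}
    (hP : P.PosSemidef) : (R + Gm B St P).PosDef :=
  hR.add_posSemidef ((hSt.kronecker hP).transpose_mul_mul_same _)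

lemma lyapunovMap_eq_riccatiMap_add_of_posSemidef (hSt : St.PosSemidef) (hR : R.PosDef)
    {P : Matrix (Fin d) (Fin d) ℝ} (hP : P.PosSemidef) (K : Matrix (Fin m) (Fin d) ℝ) :
    lyapunovMap A B St Q R K P = riccatiMap A B St Q R P +
      (K - optimalGain A B St R P)ᵀ * (R + Gm B St P) * (K - optimalGain A B St R P) :=
  lyapunovMap_eq_riccatiMap_add (isHermitian_iff_isSymm.1 hSt.isHermitian)
    (isHermitian_iff_isSymm.1 hP.isHermitian) (isHermitian_iff_isSymm.1 hR.isHermitian)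
    (posDef_add_Gm hSt hR hP).det_pos.ne'.isUnit K

lemma lyapunovMap_optimalGain (hSt : St.PosSemidef) (hR : R.PosDef)
    {P : Matrix (Fin d) (Fin d) ℝ} (hP : P.PosSemidef) :
    lyapunovMap A B St Q R (optimalGain A B St R P) P = riccatiMap A B St Q R P := by
  simp [lyapunovMap_eq_riccatiMap_add_of_posSemidef hSt hR hP]

lemma riccatiMap_le_lyapunovMap (hSt : St.PosSemidef) (hR : R.PosDef)
    {P : Matrix (Fin d) (Fin d) ℝ} (hP : P.PosSemidef) (K : Matrix (Fin m) (Fin d) ℝ) :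
    riccatiMap A B St Q R P ≤ lyapunovMap A B St Q R K P := by
  rw [lyapunovMap_eq_riccatiMap_add_of_posSemidef hSt hR hP]
  exact le_add_of_nonneg_right <| nonneg_iff_posSemidef.2 <|
    (posDef_add_Gm hSt hR hP).posSemidef.transpose_mul_mul_same _

lemma lyapunovMap_mono (hSt : St.PosSemidef) (K : Matrix (Fin m) (Fin d) ℝ) :
    Monotone (lyapunovMap A B St Q R K) := fun _ _ h => by
  unfold lyapunovMap
  gcongr
  exact transpose_mul_mul_le_transpose_mul_mul (kronecker_le_kronecker_left hSt h) _

lemma le_lyapunovMap (hSt : St.PosSemidef) (hR : R.PosSemidef) {P : Matrix (Fin d) (Fin d) ℝ}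
    (hP : P.PosSemidef) (K : Matrix (Fin m) (Fin d) ℝ) : Q ≤ lyapunovMap A B St Q R K P := by
  rw [lyapunovMap, add_assoc]
  exact le_add_of_nonneg_right <| nonneg_iff_posSemidef.2 <|
    (hR.transpose_mul_mul_same K).add ((hSt.kronecker hP).transpose_mul_mul_same _)

lemma le_riccatiMap (hSt : St.PosSemidef) (hR : R.PosDef) {P : Matrix (Fin d) (Fin d) ℝ}
    (hP : P.PosSemidef) : Q ≤ riccatiMap A B St Q R P :=
  lyapunovMap_optimalGain (A := A) hSt hR hP ▸ le_lyapunovMap hSt hR.posSemidef hP _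

lemma riccatiMap_mono (hSt : St.PosSemidef) (hR : R.PosDef) {P P' : Matrix (Fin d) (Fin d) ℝ}
    (hP : P.PosSemidef) (h : P ≤ P') : riccatiMap A B St Q R P ≤ riccatiMap A B St Q R P' := by
  have hP' : P'.PosSemidef := nonneg_iff_posSemidef.1 (hP.nonneg.trans h)
  calc riccatiMap A B St Q R P ≤ lyapunovMap A B St Q R (optimalGain A B St R P') P :=
        riccatiMap_le_lyapunovMap hSt hR hP _
    _ ≤ lyapunovMap A B St Q R (optimalGain A B St R P') P' := lyapunovMap_mono hSt _ h
    _ = riccatiMap A B St Q R P' := lyapunovMap_optimalGain hSt hR hP'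

lemma exists_lyapunovMap_smul_le (hQ : Q.IsHermitian) (hR : R.IsHermitian)
    {K : Matrix (Fin m) (Fin d) ℝ} {P : Matrix (Fin d) (Fin d) ℝ}
    (hP : (P - (Abar A + Bbar B * K)ᵀ * (St ⊗ₖ P) * (Abar A + Bbar B * K)).PosDef) :
    ∃ c : ℝ, 0 < c ∧ lyapunovMap A B St Q R K (c • P) ≤ c • P := by
  set C := Abar A + Bbar B * K
  have hQK : (Q + Kᵀ * R * K).IsHermitian :=
    hQ.add (by simpa only [conjTranspose_eq_transpose_of_trivial] using
      isHermitian_conjTranspose_mul_mul K hR)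
  obtain ⟨c, hc, hle⟩ := exists_le_smul_of_posDef hP hQK
  refine ⟨c, hc, ?_⟩
  calc lyapunovMap A B St Q R K (c • P) = Q + Kᵀ * R * K + c • (Cᵀ * (St ⊗ₖ P) * C) := by
        rw [lyapunovMap, kronecker_smul, Matrix.mul_smul, Matrix.smul_mul]
    _ ≤ c • (P - Cᵀ * (St ⊗ₖ P) * C) + c • (Cᵀ * (St ⊗ₖ P) * C) := by gcongr
    _ = c • P := by rw [← smul_add, sub_add_cancel]

lemma continuousAt_riccatiMap {P : Matrix (Fin d) (Fin d) ℝ} (hW : IsUnit (R + Gm B St P).det) :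
    ContinuousAt (riccatiMap A B St Q R) P := by
  have hkron : Continuous fun P : Matrix (Fin d) (Fin d) ℝ => St ⊗ₖ P :=
    continuous_matrix fun _ _ =>
      continuous_const.mul ((continuous_apply _).comp (continuous_apply _))
  have hF : Continuous (Fm A St) := (continuous_const.matrix_mul hkron).matrix_mul continuous_const
  have hG : Continuous (Gm B St) := (continuous_const.matrix_mul hkron).matrix_mul continuous_const
  have hH : Continuous (Hm A B St) :=
    (continuous_const.matrix_mul hkron).matrix_mul continuous_const
  have hinv : ContinuousAt (fun P => (R + Gm B St P)⁻¹) P :=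
    (continuousAt_matrix_inv _ <| by
      simpa [Ring.inverse_eq_inv'] using continuousAt_inv₀ hW.ne_zero).comp
      (continuous_const.add hG).continuousAt
  exact (continuous_const.add hF).continuousAt.sub
    ((hH.matrix_transpose.continuousAt.matrix_mul hinv).matrix_mul hH.continuousAt)

end Riccati

section ValueIteration

variable {n d m : ℕ} {A : Fin (n + 1) → Matrix (Fin d) (Fin d) ℝ}
  {B : Fin (n + 1) → Matrix (Fin d) (Fin m) ℝ} {St : Matrix (Fin (n + 1)) (Fin (n + 1)) ℝ}
  {Q : Matrix (Fin d) (Fin d) ℝ} {R : Matrix (Fin m) (Fin m) ℝ}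

lemma Pseq_nonneg (hSt : St.PosSemidef) (hQ : Q.PosSemidef) (hR : R.PosDef) :
    ∀ k, 0 ≤ Pseq A B St Q R k
  | 0 => le_rfl
  | k + 1 => hQ.nonneg.trans <| le_riccatiMap hSt hR <|
      nonneg_iff_posSemidef.1 (Pseq_nonneg hSt hQ hR k)

lemma Pseq_monotone (hSt : St.PosSemidef) (hQ : Q.PosSemidef) (hR : R.PosDef) :
    Monotone (Pseq A B St Q R) := by
  refine monotone_nat_of_le_succ fun k => ?_
  induction k with
  | zero => exact Pseq_nonneg hSt hQ hR 1
  | succ k ih =>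
    exact riccatiMap_mono hSt hR (nonneg_iff_posSemidef.1 (Pseq_nonneg hSt hQ hR k)) ih

lemma Pseq_le_of_lyapunovMap_le (hSt : St.PosSemidef) (hQ : Q.PosSemidef) (hR : R.PosDef)
    {K : Matrix (Fin m) (Fin d) ℝ} {U : Matrix (Fin d) (Fin d) ℝ} (hU₀ : 0 ≤ U)
    (hU : lyapunovMap A B St Q R K U ≤ U) : ∀ k, Pseq A B St Q R k ≤ U
  | 0 => hU₀
  | k + 1 => calc
      Pseq A B St Q R (k + 1) ≤ lyapunovMap A B St Q R K (Pseq A B St Q R k) :=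
        riccatiMap_le_lyapunovMap hSt hR (nonneg_iff_posSemidef.1 (Pseq_nonneg hSt hQ hR k)) K
      _ ≤ lyapunovMap A B St Q R K U :=
        lyapunovMap_mono hSt K (Pseq_le_of_lyapunovMap_le hSt hQ hR hU₀ hU k)
      _ ≤ U := hU

lemma of_add_mul_eq_Abar_add_Bbar_mul (K : Matrix (Fin m) (Fin d) ℝ) :
    (of fun (p : Fin (n + 1) × Fin d) (j : Fin d) => (A p.1 + B p.1 * K) p.2 j)
      = Abar A + Bbar B * K := by
  ext
  simp [Abar, Bbar, mul_apply]

end ValueIteration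

/-- Under mean square stabilizability, value iteration is monotone, bounded
above in the Loewner order, and converges entrywise to a symmetric positive definite solution
of the Riccati equation. -/
theorem stmt11 {n d m : ℕ}
    (A : Fin (n + 1) → Matrix (Fin d) (Fin d) ℝ)
    (B : Fin (n + 1) → Matrix (Fin d) (Fin m) ℝ)
    (ν : Measure (Fin n → ℝ)) [IsProbabilityMeasure ν]
    (hint1 : ∀ i, Integrable (fun w : Fin n → ℝ => w i) ν)
    (hint2 : ∀ i j, Integrable (fun w : Fin n → ℝ => w i * w j) ν)
    (μ : Fin n → ℝ) (hμ : ∀ i, μ i = ∫ w, w i ∂ν)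
    (Sg : Matrix (Fin n) (Fin n) ℝ)
    (hSg : ∀ i j, Sg i j = ∫ w, (w i - μ i) * (w j - μ j) ∂ν)
    (Q : Matrix (Fin d) (Fin d) ℝ) (hQ : Q.PosDef)
    (R : Matrix (Fin m) (Fin m) ℝ) (hR : R.PosDef)
    -- mean square stabilizability
    (hstab : ∃ (Kb : Matrix (Fin m) (Fin d) ℝ) (Pb : Matrix (Fin d) (Fin d) ℝ),
      Pb.PosDef ∧
      (Pb - (Matrix.of fun (p : Fin (n + 1) × Fin d) (j : Fin d) =>
          (A p.1 + B p.1 * Kb) p.2 j)ᵀ *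
        (tildeSigma μ Sg ⊗ₖ Pb) *
        (Matrix.of fun (p : Fin (n + 1) × Fin d) (j : Fin d) =>
          (A p.1 + B p.1 * Kb) p.2 j)).PosDef) :
    (∀ k, (Pseq A B (tildeSigma μ Sg) Q R (k + 1) -
        Pseq A B (tildeSigma μ Sg) Q R k).PosSemidef) ∧
    (∃ U : Matrix (Fin d) (Fin d) ℝ, ∀ k,
        (U - Pseq A B (tildeSigma μ Sg) Q R k).PosSemidef) ∧
    (∃ Pinf : Matrix (Fin d) (Fin d) ℝ, Pinf.PosDef ∧
      (∀ i j, Filter.Tendsto (fun k => Pseq A B (tildeSigma μ Sg) Q R k i j)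
        Filter.atTop (nhds (Pinf i j))) ∧
      Pinf = Q + Fm A (tildeSigma μ Sg) Pinf -
        (Hm A B (tildeSigma μ Sg) Pinf)ᵀ * (R + Gm B (tildeSigma μ Sg) Pinf)⁻¹ *
          Hm A B (tildeSigma μ Sg) Pinf) := by
  have hSt := tildeSigma_posSemidef hint1 hint2 hμ hSg
  have hmono := Pseq_monotone (A := A) (B := B) hSt hQ.posSemidef hR
  obtain ⟨Kb, Pb, hPb, hstab⟩ := hstab
  rw [of_add_mul_eq_Abar_add_Bbar_mul] at hstab
  obtain ⟨c, hc, hcPb⟩ := exists_lyapunovMap_smul_le hQ.isHermitian hR.isHermitian hstab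
  have hbdd := Pseq_le_of_lyapunovMap_le hSt hQ.posSemidef hR
    (smul_nonneg hc.le hPb.posSemidef.nonneg) hcPb
  obtain ⟨Pinf, hlim⟩ := exists_tendsto_of_monotone_of_le hmono hbdd
  have hQ_le : Q ≤ Pinf :=
    (le_riccatiMap hSt hR PosSemidef.zero).trans (hmono.ge_of_tendsto hlim 1)
  have hPinf : Pinf.PosDef := by simpa using hQ.add_posSemidef (le_iff.1 hQ_le)
  have hW := (posDef_add_Gm (B := B) hSt hR hPinf.posSemidef).det_pos.ne'.isUnit
  have hfix : Pinf = riccatiMap A B (tildeSigma μ Sg) Q R Pinf :=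
    tendsto_nhds_unique (hlim.comp (tendsto_add_atTop_nat 1))
      ((continuousAt_riccatiMap hW).tendsto.comp hlim)
  refine ⟨fun k => hmono k.le_succ, ⟨_, hbdd⟩, Pinf, hPinf, fun i j => ?_, hfix⟩
  exact (continuous_apply_apply i j).continuousAt.tendsto.comp hlim

end
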